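/- Let φ be an LTL formula and w an infinite word. Let G be the set of G-subformulas Gψ of φ such that w ⊨ FGψ. For each Gψ ∈ G let ind(w,ψ) be the smallest index j with w_j ⊨ Gψ. Then: for every i ∈ ℕ, the conjunction of afG(φ, w[0..i]) together with ⋀_{Gψ∈G}(Gψ ∧ ⋀_{j=0}^{i} afG(ψ, w[j..i])) together with ⋀_{Gψ∈ GG(φ)\G} ¬Gψ propositionally implies af(φ, w[0..i]). -/

import Mathlib

namespace LTLF

/-- LTL formulas in negation normal form over atomic propositions `Ap`. -/
inductive LTL (Ap : Type) : Type
  | tt : LTL Ap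
  | ff : LTL Ap
  | atom : Ap → LTL Ap
  | natom : Ap → LTL Ap
  | and : LTL Ap → LTL Ap → LTL Ap
  | or : LTL Ap → LTL Ap → LTL Ap
  | next : LTL Ap → LTL Ap
  | fut : LTL Ap → LTL Ap
  | glob : LTL Ap → LTL Ap
  | untl : LTL Ap → LTL Ap → LTL Ap

variable {Ap : Type}

/-- Infinite words over the alphabet `2^Ap`. -/
abbrev Word (Ap : Type) := ℕ → Set Ap

/-- The suffix `w_k`. -/
def suffix (w : Word Ap) (k : ℕ) : Word Ap := fun i => w (i + k)

/-- Standard LTL semantics on infinite words. -/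
def Sat : LTL Ap → Word Ap → Prop
  | .tt, _ => True
  | .ff, _ => False
  | .atom a, w => a ∈ w 0
  | .natom a, w => a ∉ w 0
  | .and φ ψ, w => Sat φ w ∧ Sat ψ w
  | .or φ ψ, w => Sat φ w ∨ Sat ψ w
  | .next φ, w => Sat φ (suffix w 1)
  | .fut φ, w => ∃ k, Sat φ (suffix w k)
  | .glob φ, w => ∀ k, Sat φ (suffix w k)
  | .untl φ ψ, w => ∃ k, Sat ψ (suffix w k) ∧ ∀ j < k, Sat φ (suffix w j)

open Classical in
/-- The "after function" `af(φ, ν)`. -/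
noncomputable def af : LTL Ap → Set Ap → LTL Ap
  | .tt, _ => .tt
  | .ff, _ => .ff
  | .atom a, ν => if a ∈ ν then .tt else .ff
  | .natom a, ν => if a ∈ ν then .ff else .tt
  | .and φ ψ, ν => .and (af φ ν) (af ψ ν)
  | .or φ ψ, ν => .or (af φ ν) (af ψ ν)
  | .next φ, _ => φ
  | .fut φ, ν => .or (af φ ν) (.fut φ)
  | .glob φ, ν => .and (af φ ν) (.glob φ)
  | .untl φ ψ, ν => .or (af ψ ν) (.and (af φ ν) (.untl φ ψ))

/-- `af` extended to finite words. -/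
noncomputable def afw (φ : LTL Ap) (u : List (Set Ap)) : LTL Ap := u.foldl af φ

open Classical in
/-- The variant `afG`, identical to `af` except `afG(Gφ, ν) = Gφ`. -/
noncomputable def afG : LTL Ap → Set Ap → LTL Ap
  | .tt, _ => .tt
  | .ff, _ => .ff
  | .atom a, ν => if a ∈ ν then .tt else .ff
  | .natom a, ν => if a ∈ ν then .ff else .tt
  | .and φ ψ, ν => .and (afG φ ν) (afG ψ ν)
  | .or φ ψ, ν => .or (afG φ ν) (afG ψ ν)
  | .next φ, _ => φ
  | .fut φ, ν => .or (afG φ ν) (.fut φ)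
  | .glob φ, _ => .glob φ
  | .untl φ ψ, ν => .or (afG ψ ν) (.and (afG φ ν) (.untl φ ψ))

/-- `afG` extended to finite words. -/
noncomputable def afGw (φ : LTL Ap) (u : List (Set Ap)) : LTL Ap := u.foldl afG φ

/-- The finite infix `w[i..j] = w[i] w[i+1] ⋯ w[j]`. -/
def infixW (w : Word Ap) (i j : ℕ) : List (Set Ap) :=
  (List.range (j + 1 - i)).map (fun k => w (i + k))

/-- The finite prefix `w[0..i]`. -/
def prefixW (w : Word Ap) (i : ℕ) : List (Set Ap) := infixW w 0 i

/-- Concatenation of a finite word with an infinite word. -/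
def cat (u : List (Set Ap)) (w : Word Ap) : Word Ap :=
  fun k => if h : k < u.length then u.get ⟨k, h⟩ else w (k - u.length)

/-- Propositional evaluation of a formula under a valuation `v`, treating
literals and temporal formulas (`X`, `F`, `G`, `U`) as opaque propositional atoms. -/
def propSat (v : LTL Ap → Prop) : LTL Ap → Prop
  | .tt => True
  | .ff => False
  | .and φ ψ => propSat v φ ∧ propSat v ψ
  | .or φ ψ => propSat v φ ∨ propSat v ψ
  | φ => v φ

/-- A valuation is consistent on literals: `a` and `¬a` get complementary values. -/
def LitConsistent (v : LTL Ap → Prop) : Prop :=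
  ∀ a : Ap, v (.atom a) ↔ ¬ v (.natom a)

/-- Propositional implication `φ ⊨_p ψ`. -/
def PropImp (φ ψ : LTL Ap) : Prop :=
  ∀ v : LTL Ap → Prop, LitConsistent v → propSat v φ → propSat v ψ

/-- Propositional equivalence `φ ≡_p ψ`. -/
def PropEquiv (φ ψ : LTL Ap) : Prop :=
  ∀ v : LTL Ap → Prop, LitConsistent v → (propSat v φ ↔ propSat v ψ)

/-- `⋀_{χ ∈ H} χ ⊨_p ψ` : the (possibly infinite) conjunction of the
hypotheses `H` propositionally implies `ψ`. -/
def PropImpSet (H : Set (LTL Ap)) (ψ : LTL Ap) : Prop :=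
  ∀ v : LTL Ap → Prop, LitConsistent v → (∀ χ ∈ H, propSat v χ) → propSat v ψ

/-- The list of subformulas of a formula. -/
def subfs : LTL Ap → List (LTL Ap)
  | .tt => [.tt]
  | .ff => [.ff]
  | .atom a => [.atom a]
  | .natom a => [.natom a]
  | .and φ ψ => .and φ ψ :: (subfs φ ++ subfs ψ)
  | .or φ ψ => .or φ ψ :: (subfs φ ++ subfs ψ)
  | .next φ => .next φ :: subfs φ
  | .fut φ => .fut φ :: subfs φ
  | .glob φ => .glob φ :: subfs φ
  | .untl φ ψ => .untl φ ψ :: (subfs φ ++ subfs ψ)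

/-- `Gψ` is a `G`-subformula of `φ`. -/
def GSub (φ ψ : LTL Ap) : Prop := LTL.glob ψ ∈ subfs φ

/-- A formula is `G`-free if it contains no occurrence of `G`. -/
def GFree : LTL Ap → Prop
  | .glob _ => False
  | .and φ ψ => GFree φ ∧ GFree ψ
  | .or φ ψ => GFree φ ∧ GFree ψ
  | .next φ => GFree φ
  | .fut φ => GFree φ
  | .untl φ ψ => GFree φ ∧ GFree ψ
  | _ => True

/-- `ind(w, ψ)`: the least index `j` with `w_j ⊨ Gψ`. -/
noncomputable def ind (w : Word Ap) (ψ : LTL Ap) : ℕ :=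
  sInf {j | Sat (.glob ψ) (suffix w j)}

/-!
`af` and `afG` differ only at `G`-formulas: `af` unfolds `Gψ` into `af(ψ, ·) ∧ Gψ` at every
later letter, so `af(Gψ, u)` is `Gψ` together with `af(ψ, s)` for every nonempty suffix `s`
of `u`, whereas `afG` keeps `Gψ` frozen. If `Gψ` is true under `v`, then `Gψ ∈ G` (the atoms
`¬Gψ` falsify the others), so the hypotheses supply `afG(ψ, s)` for all those suffixes, and by
induction on the formula `afG(ψ, s)` implies `af(ψ, s)`. `F` and `U` are unfolded letter by letter.
-/

theorem afw_cons (φ : LTL Ap) (ν : Set Ap) (u : List (Set Ap)) :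
    afw φ (ν :: u) = afw (af φ ν) u := rfl

theorem afGw_cons (φ : LTL Ap) (ν : Set Ap) (u : List (Set Ap)) :
    afGw φ (ν :: u) = afGw (afG φ ν) u := rfl

theorem afw_tt (u : List (Set Ap)) : afw .tt u = .tt :=
  List.foldl_fixed' (fun _ => rfl) u

theorem afw_ff (u : List (Set Ap)) : afw .ff u = .ff :=
  List.foldl_fixed' (fun _ => rfl) u

theorem afGw_tt (u : List (Set Ap)) : afGw .tt u = .tt :=
  List.foldl_fixed' (fun _ => rfl) u

theorem afGw_ff (u : List (Set Ap)) : afGw .ff u = .ff :=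
  List.foldl_fixed' (fun _ => rfl) u

theorem afGw_glob (φ : LTL Ap) (u : List (Set Ap)) : afGw (.glob φ) u = .glob φ :=
  List.foldl_fixed' (fun _ => rfl) u

theorem afw_and (φ ψ : LTL Ap) (u : List (Set Ap)) :
    afw (.and φ ψ) u = .and (afw φ u) (afw ψ u) :=
  List.foldl_hom₂ u _ _ _ _ φ ψ fun _ _ _ => rfl

theorem afw_or (φ ψ : LTL Ap) (u : List (Set Ap)) :
    afw (.or φ ψ) u = .or (afw φ u) (afw ψ u) :=
  List.foldl_hom₂ u _ _ _ _ φ ψ fun _ _ _ => rfl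

theorem afGw_and (φ ψ : LTL Ap) (u : List (Set Ap)) :
    afGw (.and φ ψ) u = .and (afGw φ u) (afGw ψ u) :=
  List.foldl_hom₂ u _ _ _ _ φ ψ fun _ _ _ => rfl

theorem afGw_or (φ ψ : LTL Ap) (u : List (Set Ap)) :
    afGw (.or φ ψ) u = .or (afGw φ u) (afGw ψ u) :=
  List.foldl_hom₂ u _ _ _ _ φ ψ fun _ _ _ => rfl

theorem afw_atom (a : Ap) (u : List (Set Ap)) : afw (.atom a) u = afGw (.atom a) u := by
  cases u with
  | nil => rfl
  | cons ν u =>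
    by_cases h : a ∈ ν <;>
      simp [afw_cons, afGw_cons, af, afG, h, afw_tt, afGw_tt, afw_ff, afGw_ff]

theorem afw_natom (a : Ap) (u : List (Set Ap)) : afw (.natom a) u = afGw (.natom a) u := by
  cases u with
  | nil => rfl
  | cons ν u =>
    by_cases h : a ∈ ν <;>
      simp [afw_cons, afGw_cons, af, afG, h, afw_tt, afGw_tt, afw_ff, afGw_ff]

theorem afw_fut_cons (φ : LTL Ap) (ν : Set Ap) (u : List (Set Ap)) :
    afw (.fut φ) (ν :: u) = .or (afw φ (ν :: u)) (afw (.fut φ) u) :=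
  afw_or _ _ u

theorem afGw_fut_cons (φ : LTL Ap) (ν : Set Ap) (u : List (Set Ap)) :
    afGw (.fut φ) (ν :: u) = .or (afGw φ (ν :: u)) (afGw (.fut φ) u) :=
  afGw_or _ _ u

theorem afw_untl_cons (φ ψ : LTL Ap) (ν : Set Ap) (u : List (Set Ap)) :
    afw (.untl φ ψ) (ν :: u) =
      .or (afw ψ (ν :: u)) (.and (afw φ (ν :: u)) (afw (.untl φ ψ) u)) := by
  rw [afw_cons, af, afw_or, afw_and]; rfl

theorem afGw_untl_cons (φ ψ : LTL Ap) (ν : Set Ap) (u : List (Set Ap)) :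
    afGw (.untl φ ψ) (ν :: u) =
      .or (afGw ψ (ν :: u)) (.and (afGw φ (ν :: u)) (afGw (.untl φ ψ) u)) := by
  rw [afGw_cons, afG, afGw_or, afGw_and]; rfl

theorem afw_glob_cons (φ : LTL Ap) (ν : Set Ap) (u : List (Set Ap)) :
    afw (.glob φ) (ν :: u) = .and (afw φ (ν :: u)) (afw (.glob φ) u) :=
  afw_and _ _ u

theorem propSat_afw_glob {v : LTL Ap → Prop} {φ : LTL Ap} (hG : v (.glob φ)) :
    ∀ {u : List (Set Ap)}, (∀ s, s ≠ [] → s <:+ u → propSat v (afw φ s)) →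
      propSat v (afw (.glob φ) u)
  | [], _ => hG
  | ν :: u, h => by
    rw [afw_glob_cons]
    exact ⟨h _ (List.cons_ne_nil ν u) List.suffix_rfl,
      propSat_afw_glob hG fun s hs hsu => h s hs (hsu.trans (List.suffix_cons ν u))⟩

theorem infixW_eq_drop_prefixW (w : Word Ap) (j i : ℕ) :
    infixW w j i = (prefixW w i).drop j := by
  apply List.ext_getElem <;> simp [infixW, prefixW]

theorem exists_infixW_eq_of_suffix {w : Word Ap} {i : ℕ} {s : List (Set Ap)} (hs : s ≠ [])
    (hsu : s <:+ prefixW w i) : ∃ j ≤ i, s = infixW w j i := by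
  have hlen : (prefixW w i).length = i + 1 := by simp [prefixW, infixW]
  refine ⟨(prefixW w i).length - s.length, ?_, ?_⟩
  · have := List.length_pos_iff.mpr hs
    omega
  · rw [infixW_eq_drop_prefixW]
    exact List.suffix_iff_eq_drop.mp hsu

theorem propSat_afw_of_propSat_afGw {v : LTL Ap → Prop} {u₀ : List (Set Ap)} {φ : LTL Ap}
    (hG : ∀ ψ, GSub φ ψ → v (.glob ψ) →
      ∀ s, s ≠ [] → s <:+ u₀ → propSat v (afGw ψ s)) :
    ∀ u, u <:+ u₀ → propSat v (afGw φ u) → propSat v (afw φ u) := by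
  induction φ with
  | tt => exact fun _ _ _ => by rw [afw_tt]; trivial
  | ff => exact fun _ _ h => by rw [afGw_ff] at h; exact h.elim
  | atom a => exact fun _ _ h => by rwa [afw_atom]
  | natom a => exact fun _ _ h => by rwa [afw_natom]
  | and φ ψ ihφ ihψ =>
    intro u hu h
    rw [afGw_and] at h
    rw [afw_and]
    exact ⟨ihφ (fun χ hχ => hG χ (by simp_all [GSub, subfs])) u hu h.1,
      ihψ (fun χ hχ => hG χ (by simp_all [GSub, subfs])) u hu h.2⟩
  | or φ ψ ihφ ihψ =>
    intro u hu h
    rw [afGw_or] at h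
    rw [afw_or]
    exact h.imp (ihφ (fun χ hχ => hG χ (by simp_all [GSub, subfs])) u hu)
      (ihψ (fun χ hχ => hG χ (by simp_all [GSub, subfs])) u hu)
  | next φ ih =>
    rintro (_ | ⟨ν, u⟩) hu h
    · exact h
    · exact ih (fun χ hχ => hG χ (by simp_all [GSub, subfs])) u
        ((List.suffix_cons ν u).trans hu) h
  | fut φ ih =>
    have ih := ih fun χ hχ => hG χ (by simp_all [GSub, subfs])
    intro u hu h
    induction u with
    | nil => exact h
    | cons ν u ihu =>
      rw [afGw_fut_cons] at h
      rw [afw_fut_cons]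
      exact h.imp (ih _ hu) (ihu ((List.suffix_cons ν u).trans hu))
  | untl φ ψ ihφ ihψ =>
    have ihφ := ihφ fun χ hχ => hG χ (by simp_all [GSub, subfs])
    have ihψ := ihψ fun χ hχ => hG χ (by simp_all [GSub, subfs])
    intro u hu h
    induction u with
    | nil => exact h
    | cons ν u ihu =>
      rw [afGw_untl_cons] at h
      rw [afw_untl_cons]
      exact h.imp (ihψ _ hu) (And.imp (ihφ _ hu) (ihu ((List.suffix_cons ν u).trans hu)))
  | glob φ ih =>
    intro u hu h
    rw [afGw_glob] at h
    have hGφ : GSub (.glob φ) φ := List.mem_cons_self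
    refine propSat_afw_glob (v := v) h fun s hs hsu => ?_
    exact ih (fun χ hχ => hG χ (by simp_all [GSub, subfs])) s (hsu.trans hu)
      (hG φ hGφ h s hs (hsu.trans hu))

theorem master_implication_with_afG_general {Ap : Type} (φ : LTL Ap) (w : Word Ap) (i : ℕ)
    (v : LTL Ap → Prop)
    (h0 : propSat v (afGw φ (prefixW w i)))
    (h1 : ∀ ψ : LTL Ap, GSub φ ψ → Sat (LTL.fut (LTL.glob ψ)) w →
      propSat v (LTL.glob ψ) ∧ ∀ j ≤ i, propSat v (afGw ψ (infixW w j i)))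
    (h2 : ∀ ψ : LTL Ap, GSub φ ψ → ¬ Sat (LTL.fut (LTL.glob ψ)) w →
      ¬ propSat v (LTL.glob ψ)) :
    propSat v (afw φ (prefixW w i)) := by
  refine propSat_afw_of_propSat_afGw (fun ψ hψ hGψ s hs hsu => ?_) _ List.suffix_rfl h0
  obtain ⟨j, hj, rfl⟩ := exists_infixW_eq_of_suffix hs hsu
  have hFG : Sat (.fut (.glob ψ)) w := by_contra fun hFG => h2 ψ hψ hFG hGψ
  exact (h1 ψ hψ hFG).2 j hj

/-- for every `i`, the conjunction of `afG(φ, w[0..i])`, of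
`Gψ ∧ ⋀_{j=0}^i afG(ψ, w[j..i])` over `Gψ ∈ G`, and of the atoms `¬Gψ` for
`Gψ ∈ GG(φ)\G` (encoded by forcing `v(Gψ)` to be false) propositionally
implies `af(φ, w[0..i])`. Here `G = {Gψ ∈ GG(φ) | w ⊨ FGψ}`. -/
theorem master_implication_with_afG {Ap : Type} (φ : LTL Ap) (w : Word Ap) (i : ℕ)
    (v : LTL Ap → Prop) (hv : LitConsistent v)
    (h0 : propSat v (afGw φ (prefixW w i)))
    (h1 : ∀ ψ : LTL Ap, GSub φ ψ → Sat (LTL.fut (LTL.glob ψ)) w →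
      propSat v (LTL.glob ψ) ∧ ∀ j ≤ i, propSat v (afGw ψ (infixW w j i)))
    (h2 : ∀ ψ : LTL Ap, GSub φ ψ → ¬ Sat (LTL.fut (LTL.glob ψ)) w →
      ¬ propSat v (LTL.glob ψ)) :
    propSat v (afw φ (prefixW w i)) :=
  master_implication_with_afG_general φ w i v h0 h1 h2

end LTLF
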